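/- arXiv:2210.15538 — 2 statements merged into one kernel-verified Lean document; each statement's English description precedes it below -/
import Mathlib

section
/- For every integer m > 1, the uniform attachment process with degree cap d = 2m can always be continued: for every uniform attachment trajectory (G_k)_{m+1 ≤ k ≤ n} defined up to time n, there exist m distinct vertices of {1,…,n} each of degree strictly less than d in G_n, so that a graph G_{n+1} extending the trajectory by one admissible step exists. -/
open Finset MeasureTheory Filter Topology
open scoped ENNReal

noncomputable section

open scoped Classical

/-- The degree of vertex `v` in the graph `g`, counting neighbors among `{1, …, n}`. -/
def degIn (g : SimpleGraph ℕ) (n v : ℕ) : ℕ :=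
  ((Finset.Icc 1 n).filter fun u => g.Adj v u).card

/-- The set of neighbors of vertex `v` in the graph `g` among `{1, …, n}`. -/
def nbrsIn (g : SimpleGraph ℕ) (n v : ℕ) : Finset ℕ :=
  (Finset.Icc 1 n).filter fun u => g.Adj v u

/-- `g'` is obtained from `g` (a graph on `{1,…,n}`) by one admissible uniform-attachment
step with parameter `m` and degree cap `d = 2m`: the new vertex `n+1` is joined to `m`
distinct vertices of `{1,…,n}`, each of degree `< 2m` in `g`; adjacencies among the other
vertices are unchanged, and all edges of `g'` stay inside `{1,…,n+1}`. -/
def IsUAStep (m n : ℕ) (g g' : SimpleGraph ℕ) : Prop :=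
  (∀ u v, g'.Adj u v → u ∈ Finset.Icc 1 (n+1) ∧ v ∈ Finset.Icc 1 (n+1)) ∧
  (∀ u v, u ≠ n+1 → v ≠ n+1 → (g'.Adj u v ↔ g.Adj u v)) ∧
  (nbrsIn g' (n+1) (n+1)).card = m ∧
  (∀ u, g'.Adj (n+1) u → u ∈ Finset.Icc 1 n ∧ degIn g n u < 2*m)

/-- The complete graph on the vertex set `{1, …, k}` (as a graph on `ℕ`). -/
def completeOn (k : ℕ) : SimpleGraph ℕ :=
  SimpleGraph.fromRel (fun u v => u ∈ Finset.Icc 1 k ∧ v ∈ Finset.Icc 1 k)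

/-- A uniform attachment trajectory with parameter `m` (degree cap `d = 2m`):
`G (m+1)` is the complete graph on `{1,…,m+1}`, and for each `n ≥ m+1` the graph `G (n+1)`
is obtained from `G n` by an admissible uniform attachment step.
(The values `G k` for `k ≤ m` are irrelevant.) -/
structure UATraj (m : ℕ) where
  G : ℕ → SimpleGraph ℕ
  init : G (m+1) = completeOn (m+1)
  step : ∀ n, m+1 ≤ n → IsUAStep m n (G n) (G (n+1))

/-- A uniform attachment trajectory with parameter `m`, defined up to time `N`. -/
structure UATrajUpTo (m N : ℕ) where
  G : ℕ → SimpleGraph ℕ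
  init : G (m+1) = completeOn (m+1)
  step : ∀ n, m+1 ≤ n → n+1 ≤ N → IsUAStep m n (G n) (G (n+1))

lemma completeOn_adj (k u v : ℕ) :
    (completeOn k).Adj u v ↔ u ≠ v ∧ u ∈ Finset.Icc 1 k ∧ v ∈ Finset.Icc 1 k := by
  simp only [completeOn, SimpleGraph.fromRel_adj]
  tauto

lemma degIn_completeOn {k v : ℕ} (hv : v ∈ Finset.Icc 1 k) :
    degIn (completeOn k) k v = k - 1 := by
  unfold degIn
  have h : (Finset.Icc 1 k).filter (fun u => (completeOn k).Adj v u)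
      = (Finset.Icc 1 k).erase v := by
    ext u
    simp only [Finset.mem_filter, Finset.mem_erase, completeOn_adj]
    constructor
    · rintro ⟨hu, hne, -, -⟩; exact ⟨fun h => hne h.symm, hu⟩
    · rintro ⟨hne, hu⟩; exact ⟨hu, fun h => hne h.symm, hv, hu⟩
  rw [h, Finset.card_erase_of_mem hv, Nat.card_Icc]
  omega

/-- Main invariant: edges stay in `{1,…,k}`, all degrees are in `[m, 2m]`, and the degree
sum is `m * (2k - m - 1)`. -/
lemma traj_invariant (m N : ℕ) (hm : 1 ≤ m) (T : UATrajUpTo m N) :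
    ∀ k, m + 1 ≤ k → k ≤ N →
      (∀ u v, (T.G k).Adj u v → u ∈ Finset.Icc 1 k ∧ v ∈ Finset.Icc 1 k) ∧
      (∀ v ∈ Finset.Icc 1 k, m ≤ degIn (T.G k) k v ∧ degIn (T.G k) k v ≤ 2*m) ∧
      (∑ v ∈ Finset.Icc 1 k, degIn (T.G k) k v) = m * (2*k - m - 1) := by
  intro k hk
  induction k, hk using Nat.le_induction with
  | base =>
    intro _
    refine ⟨?_, ?_, ?_⟩
    · intro u v h
      rw [T.init, completeOn_adj] at h
      exact ⟨h.2.1, h.2.2⟩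
    · intro v hv
      rw [T.init, degIn_completeOn hv]
      constructor <;> omega
    · rw [T.init]
      rw [Finset.sum_congr rfl (fun v hv => degIn_completeOn hv)]
      rw [Finset.sum_const, Nat.card_Icc, smul_eq_mul]
      have : 2 * (m + 1) - m - 1 = m + 1 := by omega
      rw [this]
      simp only [Nat.add_sub_cancel]
      ring
  | succ k hk ih =>
    intro hk1
    obtain ⟨hsupp0, hdeg0, hsum0⟩ := ih (by omega)
    obtain ⟨hsupp, hold, hcard, hnew⟩ := T.step k hk hk1
    set g := T.G k with hg
    set g' := T.G (k+1) with hg'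
    set S' := nbrsIn g' (k+1) (k+1) with hS'
    have hS'sub : S' ⊆ Finset.Icc 1 k := by
      intro u hu
      rw [hS'] at hu
      simp only [nbrsIn, Finset.mem_filter] at hu
      exact (hnew u hu.2).1
    have hS'mem : ∀ u, u ∈ S' ↔ g'.Adj (k+1) u := by
      intro u
      simp only [hS', nbrsIn, Finset.mem_filter]
      constructor
      · exact fun h => h.2
      · intro h; exact ⟨(hsupp _ _ h).2, h⟩
    have hknot : (k+1) ∉ Finset.Icc 1 k := by simp
    have hIcc : Finset.Icc 1 (k+1) = insert (k+1) (Finset.Icc 1 k) :=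
      (Finset.insert_Icc_right_eq_Icc_add_one (by omega)).symm
    -- degrees of old vertices
    have hdeg' : ∀ v ∈ Finset.Icc 1 k,
        degIn g' (k+1) v = degIn g k v + (if v ∈ S' then 1 else 0) := by
      intro v hv
      have hvk : v ≠ k+1 := by
        simp only [Finset.mem_Icc] at hv; omega
      have hfilt : (Finset.Icc 1 k).filter (fun u => g'.Adj v u)
          = (Finset.Icc 1 k).filter (fun u => g.Adj v u) := by
        apply Finset.filter_congr
        intro u hu
        have huk : u ≠ k+1 := by
          simp only [Finset.mem_Icc] at hu; omega
        simp only [hold v u hvk huk]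
      unfold degIn
      rw [hIcc, Finset.filter_insert]
      by_cases hadj : g'.Adj v (k+1)
      · rw [if_pos hadj, Finset.card_insert_of_notMem (fun h => hknot (Finset.filter_subset _ _ h)),
          hfilt, if_pos ((hS'mem v).2 hadj.symm)]
      · rw [if_neg hadj, hfilt, if_neg (fun h => hadj ((hS'mem v).1 h).symm)]
        omega
    have hdegnew : degIn g' (k+1) (k+1) = m := hcard
    refine ⟨?_, ?_, ?_⟩
    · intro u v h
      exact hsupp u v h
    · intro v hv
      rw [hIcc, Finset.mem_insert] at hv
      rcases hv with rfl | hv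
      · rw [hdegnew]; constructor <;> omega
      · rw [hdeg' v hv]
        obtain ⟨h1, h2⟩ := hdeg0 v hv
        by_cases hmem : v ∈ S'
        · have := (hnew v ((hS'mem v).1 hmem)).2
          rw [if_pos hmem]; omega
        · rw [if_neg hmem]; omega
    · rw [hIcc, Finset.sum_insert hknot, hdegnew,
        Finset.sum_congr rfl hdeg', Finset.sum_add_distrib, hsum0]
      have hsplit : (∑ v ∈ Finset.Icc 1 k, if v ∈ S' then 1 else 0) = S'.card := by
        rw [← Finset.card_filter]
        congr 1
        exact Finset.filter_mem_eq_inter.trans (Finset.inter_eq_right.mpr hS'sub)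
      rw [hsplit, hcard]
      have h1 : 2 * (k+1) - m - 1 = (2*k - m - 1) + 2 := by omega
      rw [h1]; ring

theorem uniform_attachment_can_continue' (m : ℕ) (hm : 1 < m) (n : ℕ) (hn : m + 1 ≤ n)
    (T : UATrajUpTo m n) :
    (∃ S : Finset ℕ, S ⊆ Finset.Icc 1 n ∧ S.card = m ∧
      ∀ v ∈ S, degIn (T.G n) n v < 2*m) ∧
    ∃ g' : SimpleGraph ℕ, IsUAStep m n (T.G n) g' := by
  obtain ⟨hsupp, hdeg, hsum⟩ := traj_invariant m n (by omega) T n hn le_rfl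
  set g := T.G n with hg
  set O := (Finset.Icc 1 n).filter (fun v => degIn g n v < 2*m) with hO
  set C := (Finset.Icc 1 n).filter (fun v => ¬ degIn g n v < 2*m) with hC
  have hOC : O.card + C.card = n := by
    rw [hO, hC, Finset.card_filter_add_card_filter_not, Nat.card_Icc]
    omega
  -- lower bound sum on each part
  have hsplit : (∑ v ∈ O, degIn g n v) + (∑ v ∈ C, degIn g n v)
      = m * (2*n - m - 1) := by
    rw [hO, hC, Finset.sum_filter_add_sum_filter_not, hsum]
  have hOlb : m * O.card ≤ ∑ v ∈ O, degIn g n v := by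
    rw [mul_comm]
    apply Finset.card_nsmul_le_sum
    intro v hv
    exact (hdeg v (Finset.mem_filter.mp hv).1).1
  have hClb : 2 * m * C.card ≤ ∑ v ∈ C, degIn g n v := by
    rw [mul_comm]
    apply Finset.card_nsmul_le_sum
    intro v hv
    have := (Finset.mem_filter.mp hv).2
    omega
  have hOcard : m + 1 ≤ O.card := by
    have h1 : m * O.card + 2 * m * C.card ≤ m * (2*n - m - 1) := by omega
    have h2 : m * (2*n - m - 1) + m * (m+1) = m * (2*n) := by
      rw [← Nat.mul_add]; congr 1; omega
    have h3 : m * (2*n) = 2 * m * O.card + 2 * m * C.card := by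
      rw [← hOC]; ring
    have h5 : 2 * m * O.card = m * O.card + m * O.card := by ring
    have h6 : m * (m+1) ≤ m * O.card := by omega
    exact Nat.le_of_mul_le_mul_left h6 (by omega)
  obtain ⟨S, hSO, hScard⟩ := Finset.exists_subset_card_eq (show m ≤ O.card by omega)
  have hSmem : ∀ v ∈ S, v ∈ Finset.Icc 1 n ∧ degIn g n v < 2*m := by
    intro v hv
    have := hSO hv
    rw [hO, Finset.mem_filter] at this
    exact this
  have hSn : ∀ v ∈ S, v ≠ n+1 := by
    intro v hv h
    have := (hSmem v hv).1
    simp only [Finset.mem_Icc] at this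
    omega
  refine ⟨⟨S, fun v hv => (hSmem v hv).1, hScard, fun v hv => (hSmem v hv).2⟩, ?_⟩
  -- construct the new graph
  set g' := SimpleGraph.fromRel (fun u v => g.Adj u v ∨ (u = n+1 ∧ v ∈ S)) with hg'
  have hgnot : ∀ u, ¬ g.Adj (n+1) u := by
    intro u h
    have := (hsupp _ _ h).1
    simp only [Finset.mem_Icc] at this
    omega
  have hadj : ∀ u v, g'.Adj u v ↔
      u ≠ v ∧ (g.Adj u v ∨ (u = n+1 ∧ v ∈ S) ∨ (v = n+1 ∧ u ∈ S)) := by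
    intro u v
    rw [hg', SimpleGraph.fromRel_adj]
    constructor
    · rintro ⟨hne, h | h⟩
      · tauto
      · rcases h with h | h
        · exact ⟨hne, Or.inl h.symm⟩
        · tauto
    · rintro ⟨hne, h | h | h⟩
      · tauto
      · tauto
      · exact ⟨hne, Or.inr (Or.inr h)⟩
  have hadjnew : ∀ u, g'.Adj (n+1) u ↔ u ∈ S := by
    intro u
    rw [hadj]
    constructor
    · rintro ⟨hne, h | h | h⟩
      · exact absurd h (hgnot u)
      · exact h.2
      · exact absurd h.1.symm hne
    · intro h
      exact ⟨fun he => hSn u h he.symm, Or.inr (Or.inl ⟨rfl, h⟩)⟩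
  refine ⟨g', ?_, ?_, ?_, ?_⟩
  · intro u v h
    rw [hadj] at h
    have hmono : Finset.Icc 1 n ⊆ Finset.Icc 1 (n+1) :=
      Finset.Icc_subset_Icc le_rfl (by omega)
    rcases h.2 with h | h | h
    · exact ⟨hmono (hsupp u v h).1, hmono (hsupp u v h).2⟩
    · exact ⟨h.1 ▸ Finset.mem_Icc.mpr ⟨by omega, le_rfl⟩, hmono (hSmem v h.2).1⟩
    · exact ⟨hmono (hSmem u h.2).1, h.1 ▸ Finset.mem_Icc.mpr ⟨by omega, le_rfl⟩⟩
  · intro u v hu hv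
    rw [hadj]
    constructor
    · rintro ⟨hne, h | h | h⟩
      · exact h
      · exact absurd h.1 hu
      · exact absurd h.1 hv
    · intro h
      exact ⟨h.ne, Or.inl h⟩
  · have : nbrsIn g' (n+1) (n+1) = S := by
      ext u
      simp only [nbrsIn, Finset.mem_filter, hadjnew]
      constructor
      · exact fun h => h.2
      · intro h
        refine ⟨?_, h⟩
        have := (hSmem u h).1
        simp only [Finset.mem_Icc] at this ⊢
        omega
    rw [this, hScard]
  · intro u h
    rw [hadjnew] at h
    exact hSmem u h

/-- For every integer `m > 1`, the uniform attachment process with degree cap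
`d = 2m` can always be continued: for every trajectory defined up to time `n`, there exist
`m` distinct vertices of `{1,…,n}` each of degree `< 2m` in `G n`, and hence a graph
`G (n+1)` extending the trajectory by one admissible step exists. -/
theorem uniform_attachment_can_continue (m : ℕ) (hm : 1 < m) (n : ℕ) (hn : m + 1 ≤ n)
    (T : UATrajUpTo m n) :
    (∃ S : Finset ℕ, S ⊆ Finset.Icc 1 n ∧ S.card = m ∧
      ∀ v ∈ S, degIn (T.G n) n v < 2*m) ∧
    ∃ g' : SimpleGraph ℕ, IsUAStep m n (T.G n) g' :=
  uniform_attachment_can_continue' m hm n hn T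
end
end

section
/- For every integer m > 1 there exist constants C > 0 and c > 0 (depending only on m) such that in the random uniform attachment graph process with degree cap d = 2m, for every vertex v and every n ≥ v, the probability that v has degree strictly less than d in G_n is at most C·e^{−c(n−v)}. -/
open Finset MeasureTheory Filter Topology FirstOrder
open scoped ENNReal

noncomputable section

open scoped Classical

/-- `N(g)`: the number of `m`-element sets of vertices of degree `< 2m` of a graph `g`
on `{1,…,n}`. -/
def numOpenSets (m n : ℕ) (g : SimpleGraph ℕ) : ℕ :=
  (((Finset.Icc 1 n).filter fun v => degIn g n v < 2*m).card).choose m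

/-- The random uniform attachment graph process with parameter `m` (degree cap `d = 2m`),
modeled by random variables `G n` (for `n ≥ m+1`) on a probability space `(Ω, P)` taking
values in simple graphs on `{1,…,n}`: `G (m+1)` is a.s. the complete graph on `{1,…,m+1}`;
a.s. each `G (n+1)` is obtained from `G n` by an admissible uniform attachment step; and
for every graph `g` on `{1,…,n}` and every `m`-element set `S` of vertices of degree `< 2m`
of `g`, `P(G n = g and the neighborhood of n+1 in G (n+1) equals S) = P(G n = g) / N(g)`. -/
structure UAProcess (m : ℕ) {Ω : Type} [MeasurableSpace Ω] (P : Measure Ω) where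
  G : ℕ → Ω → SimpleGraph ℕ
  meas : ∀ n H, MeasurableSet {ω | G n ω = H}
  init : P {ω | G (m+1) ω = completeOn (m+1)} = 1
  stepAdm : ∀ n, m+1 ≤ n → P {ω | IsUAStep m n (G n ω) (G (n+1) ω)} = 1
  stepUnif : ∀ n, m+1 ≤ n → ∀ g : SimpleGraph ℕ,
    (∀ u v, g.Adj u v → u ∈ Finset.Icc 1 n ∧ v ∈ Finset.Icc 1 n) →
    ∀ S : Finset ℕ, S.card = m →
    (∀ v ∈ S, v ∈ Finset.Icc 1 n ∧ degIn g n v < 2*m) →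
    P {ω | G n ω = g ∧ nbrsIn (G (n+1) ω) (n+1) (n+1) = S} =
      P {ω | G n ω = g} / (numOpenSets m n g : ℝ≥0∞)

/-!
Follow the potential `Φₙ = 𝔼[w(deg v)]` with `w d = 2 ^ (2m - d)` for `d < 2m` and `w d = 0`
otherwise. Every degree is at most `2m` and the degrees sum to `2mn - m(m+1)`, so the total
deficiency `∑ (2m - deg)` is `m(m+1)` and there are at most `m(m+1)` open vertices. An open `v`
is therefore hit by the new vertex with probability `m / N ≥ 1/(m+1)`, which halves its weight,
so `Φₙ₊₁ ≤ (1 - 1/(2m+2)) Φₙ`. Since `P(deg v < 2m) ≤ Φₙ ≤ 2^(2m)`, the probability decays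
geometrically from time `max (m+1) v` on.
-/

section AEFinite

variable {Ω α : Type*} [MeasurableSpace Ω] {μ : Measure Ω}

theorem nullMeasurableSet_setOf_of_ae_imp_mem {Z : Ω → α}
    (hZ : ∀ a, MeasurableSet {ω | Z ω = a}) (T : Finset α) {p : α → Prop}
    (hT : ∀ᵐ ω ∂μ, p (Z ω) → Z ω ∈ T) : NullMeasurableSet {ω | p (Z ω)} μ := by
  refine (T.measurableSet_biUnion (f := fun a => {ω | Z ω = a ∧ p a})
    fun a _ => (hZ a).inter (MeasurableSet.const _)).nullMeasurableSet.congr ?_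
  refine Filter.eventuallyEq_set.2 (hT.mono fun ω hω => ?_)
  simp only [Set.mem_iUnion, Set.mem_ofPred_eq, exists_prop]
  exact ⟨fun ⟨a, _, ha, hpa⟩ => ha ▸ hpa, fun h => ⟨Z ω, hω h, rfl, h⟩⟩

theorem lintegral_comp_eq_sum_of_ae_mem {Y : Ω → α} {T : Finset α}
    (hY : ∀ a ∈ T, NullMeasurableSet {ω | Y ω = a} μ) (hT : ∀ᵐ ω ∂μ, Y ω ∈ T)
    (f : α → ℝ≥0∞) : ∫⁻ ω, f (Y ω) ∂μ = ∑ a ∈ T, f a * μ {ω | Y ω = a} := by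
  calc ∫⁻ ω, f (Y ω) ∂μ = ∫⁻ ω, ∑ a ∈ T, {ω | Y ω = a}.indicator (fun _ => f a) ω ∂μ := by
        refine lintegral_congr_ae (hT.mono fun ω hω => ?_)
        simp [Set.indicator_apply, hω]
    _ = ∑ a ∈ T, f a * μ {ω | Y ω = a} := by
        rw [lintegral_finsetSum' _ fun a ha => aemeasurable_const.indicator₀ (hY a ha)]
        exact sum_congr rfl fun a ha => lintegral_indicator_const₀ (hY a ha) _

end AEFinite

def openVertices (m n : ℕ) (g : SimpleGraph ℕ) : Finset ℕ :=
  (Icc 1 n).filter fun v => degIn g n v < 2*m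

/-- The invariants that every graph `G n` of the process satisfies almost surely. -/
structure IsUAGraph (m n : ℕ) (g : SimpleGraph ℕ) : Prop where
  adj_mem : ∀ u v, g.Adj u v → u ∈ Icc 1 n ∧ v ∈ Icc 1 n
  degIn_le : ∀ u ∈ Icc 1 n, degIn g n u ≤ 2*m
  sum_degIn : ∑ u ∈ Icc 1 n, degIn g n u + m*(m+1) = 2*m*n

theorem finite_setOf_isUAGraph (m n : ℕ) : {g | IsUAGraph m n g}.Finite := by
  refine Set.Finite.of_finite_image (f := fun g (u v : Icc 1 n) => g.Adj u v)
    (Set.toFinite _) fun g hg g' hg' hgg' => ?_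
  ext u v
  by_cases huv : u ∈ Icc 1 n ∧ v ∈ Icc 1 n
  · exact iff_of_eq (congrFun (congrFun hgg' ⟨u, huv.1⟩) ⟨v, huv.2⟩)
  · exact iff_of_false (huv ∘ hg.adj_mem u v) (huv ∘ hg'.adj_mem u v)

def uaGraphs (m n : ℕ) : Finset (SimpleGraph ℕ) := (finite_setOf_isUAGraph m n).toFinset

theorem mem_uaGraphs {m n : ℕ} {g : SimpleGraph ℕ} : g ∈ uaGraphs m n ↔ IsUAGraph m n g :=
  Set.Finite.mem_toFinset _

theorem isUAGraph_completeOn (m : ℕ) : IsUAGraph m (m+1) (completeOn (m+1)) := by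
  have hadj : ∀ u v, (completeOn (m+1)).Adj u v ↔ u ≠ v ∧ u ∈ Icc 1 (m+1) ∧ v ∈ Icc 1 (m+1) := by
    simp only [completeOn, SimpleGraph.fromRel_adj]
    tauto
  have hdeg : ∀ u ∈ Icc 1 (m+1), degIn (completeOn (m+1)) (m+1) u = m := by
    intro u hu
    have : (Icc 1 (m+1)).filter (fun w => (completeOn (m+1)).Adj u w) = (Icc 1 (m+1)).erase u := by
      ext w
      simp only [mem_filter, mem_erase, hadj]
      tauto
    rw [degIn, this, card_erase_of_mem hu, Nat.card_Icc]
    omega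
  refine ⟨fun u v huv => ((hadj u v).1 huv).2, fun u hu => (hdeg u hu).trans_le (by omega), ?_⟩
  rw [sum_congr rfl hdeg, sum_const, Nat.card_Icc, smul_eq_mul, Nat.add_sub_cancel]
  ring

theorem IsUAGraph.card_openVertices_le {m n : ℕ} {g : SimpleGraph ℕ} (hg : IsUAGraph m n g) :
    (openVertices m n g).card ≤ m*(m+1) := by
  have hdeficiency : ∑ u ∈ Icc 1 n, (2*m - degIn g n u) = m*(m+1) := by
    have h : ∑ u ∈ Icc 1 n, (2*m - degIn g n u) + ∑ u ∈ Icc 1 n, degIn g n u = 2*m*n := by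
      rw [← sum_add_distrib, sum_congr rfl fun u hu => Nat.sub_add_cancel (hg.degIn_le u hu)]
      simp [mul_comm]
    have := hg.sum_degIn
    omega
  calc (openVertices m n g).card = ∑ u ∈ openVertices m n g, 1 := card_eq_sum_ones _
    _ ≤ ∑ u ∈ openVertices m n g, (2*m - degIn g n u) :=
        sum_le_sum fun u hu => by simp only [openVertices, mem_filter] at hu; omega
    _ ≤ ∑ u ∈ Icc 1 n, (2*m - degIn g n u) := sum_le_sum_of_subset (filter_subset _ _)
    _ = m*(m+1) := hdeficiency

namespace IsUAStep

variable {m n : ℕ} {g g' : SimpleGraph ℕ}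

theorem nbrsIn_mem_powersetCard (h : IsUAStep m n g g') :
    nbrsIn g' (n+1) (n+1) ∈ (openVertices m n g).powersetCard m :=
  mem_powersetCard.2 ⟨fun u hu => mem_filter.2 (h.2.2.2 u (mem_filter.1 hu).2), h.2.2.1⟩

theorem degIn_succ (h : IsUAStep m n g g') {v : ℕ} (hv : v ∈ Icc 1 n) :
    degIn g' (n+1) v = degIn g n v + if v ∈ nbrsIn g' (n+1) (n+1) then 1 else 0 := by
  rw [mem_Icc] at hv
  have hold : (Icc 1 n).filter (g'.Adj v) = (Icc 1 n).filter (g.Adj v) :=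
    filter_congr fun u hu => h.2.1 v u (by omega) (by rw [mem_Icc] at hu; omega)
  have hnew : v ∈ nbrsIn g' (n+1) (n+1) ↔ g'.Adj v (n+1) := by
    simp only [nbrsIn, mem_filter, mem_Icc, SimpleGraph.adj_comm]
    exact ⟨And.right, fun hadj => ⟨⟨hv.1, by omega⟩, hadj⟩⟩
  rw [degIn, ← insert_Icc_right_eq_Icc_add_one (by omega), filter_insert, hold,
    if_congr hnew rfl rfl]
  split_ifs
  · exact card_insert_of_notMem (by simp)
  · rfl

theorem isUAGraph (h : IsUAStep m n g g') (hg : IsUAGraph m n g) : IsUAGraph m (n+1) g' := by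
  have hS := mem_powersetCard.1 h.nbrsIn_mem_powersetCard
  have hnew : degIn g' (n+1) (n+1) = m := h.2.2.1
  refine ⟨h.1, fun u hu => ?_, ?_⟩
  · rcases eq_or_ne u (n+1) with rfl | hun
    · omega
    · have hu' : u ∈ Icc 1 n := by simp only [mem_Icc] at hu ⊢; omega
      rw [h.degIn_succ hu']
      split_ifs with huS
      · have := (mem_filter.1 (hS.1 huS)).2
        omega
      · have := hg.degIn_le u hu'
        omega
  · have hcount : ∑ u ∈ Icc 1 n, (if u ∈ nbrsIn g' (n+1) (n+1) then 1 else 0) = m := by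
      rw [sum_boole, Nat.cast_id, filter_mem_eq_inter,
        inter_eq_right.2 (hS.1.trans (filter_subset _ _)), hS.2]
    rw [← insert_Icc_right_eq_Icc_add_one (by omega), sum_insert (by simp), hnew,
      sum_congr rfl fun u hu => h.degIn_succ hu, sum_add_distrib, hcount]
    have := hg.sum_degIn
    linarith

end IsUAStep

def openWeight (m d : ℕ) : ℝ≥0∞ := if d < 2*m then 2^(2*m - d) else 0

theorem two_mul_openWeight_succ_le (m d : ℕ) : 2 * openWeight m (d+1) ≤ openWeight m d := by
  unfold openWeight
  split_ifs
  · rw [← pow_succ']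
    exact le_of_eq (congrArg _ (by omega))
  · omega
  all_goals simp

theorem openWeight_le_two_pow (m d : ℕ) : openWeight m d ≤ 2^(2*m) := by
  unfold openWeight
  split_ifs
  · exact pow_le_pow_right₀ one_le_two (Nat.sub_le _ _)
  · exact zero_le

theorem Nat.choose_le_mul_choose_pred {k m : ℕ} (hm : 0 < m) (hk : k + 1 ≤ m*(m+1)) :
    k.choose m ≤ m * k.choose (m-1) := by
  obtain ⟨j, rfl⟩ : ∃ j, m = j+1 := ⟨m-1, by omega⟩
  have hpascal := Nat.add_one_mul_choose_eq k j
  rw [Nat.choose_succ_succ] at hpascal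
  rw [Nat.add_sub_cancel]
  nlinarith

theorem sum_powersetCard_openWeight_le {m d v : ℕ} {O : Finset ℕ} (hO : O.card ≤ m*(m+1))
    (hv : d < 2*m → v ∈ O) :
    (2*m+2 : ℝ≥0∞) * ∑ S ∈ O.powersetCard m, openWeight m (d + if v ∈ S then 1 else 0)
      ≤ (2*m+1) * O.card.choose m * openWeight m d := by
  by_cases hd : d < 2*m
  swap
  · have hzero : ∀ e, openWeight m (d + e) = 0 := fun e => if_neg (by omega)
    simp [hzero]
  have hvO := hv hd
  obtain ⟨k, hk⟩ : ∃ k, O.card = k+1 := ⟨O.card - 1, by have := card_pos.2 ⟨v, hvO⟩; omega⟩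
  set a := ((O.powersetCard m).filter (v ∈ ·)).card
  set b := ((O.powersetCard m).filter (v ∉ ·)).card
  have hab : a + b = O.card.choose m := by
    rw [card_filter_add_card_filter_not, card_powersetCard]
  have hb : b = k.choose m := by
    have : (O.powersetCard m).filter (v ∉ ·) = (O.erase v).powersetCard m := by
      ext S
      simp only [mem_filter, mem_powersetCard, subset_erase]
      tauto
    change card _ = _
    rw [this, card_powersetCard, card_erase_of_mem hvO, hk, Nat.add_sub_cancel]
  have ha : a = k.choose (m-1) := by
    obtain ⟨j, rfl⟩ : ∃ j, m = j+1 := ⟨m-1, by omega⟩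
    rw [hk, Nat.choose_succ_succ, hb] at hab
    simpa using hab
  -- `v` lies in a uniform `m`-subset of `O` with probability `m / |O| ≥ 1 / (m+1)`
  have hba : b ≤ m * a := by
    rw [ha, hb]
    exact Nat.choose_le_mul_choose_pred (by omega) (hk ▸ hO)
  have hsum : ∑ S ∈ O.powersetCard m, openWeight m (d + if v ∈ S then 1 else 0)
      = a * openWeight m (d+1) + b * openWeight m d := by
    have hsplit : ∀ S : Finset ℕ, openWeight m (d + if v ∈ S then 1 else 0)
        = if v ∈ S then openWeight m (d+1) else openWeight m d := fun S => by split_ifs <;> rfl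
    rw [sum_congr rfl fun S _ => hsplit S, sum_ite, sum_const, sum_const, nsmul_eq_mul,
      nsmul_eq_mul]
  have hnat : (m+1)*a + (2*m+2)*b ≤ (2*m+1)*(a+b) := by nlinarith
  calc (2*m+2 : ℝ≥0∞) * ∑ S ∈ O.powersetCard m, openWeight m (d + if v ∈ S then 1 else 0)
      = (m+1) * a * (2 * openWeight m (d+1)) + (2*m+2) * b * openWeight m d := by
        rw [hsum]; ring
    _ ≤ (m+1) * a * openWeight m d + (2*m+2) * b * openWeight m d := by
        gcongr; exact two_mul_openWeight_succ_le m d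
    _ = (((m+1)*a + (2*m+2)*b : ℕ) : ℝ≥0∞) * openWeight m d := by push_cast; ring
    _ ≤ (((2*m+1)*(a+b) : ℕ) : ℝ≥0∞) * openWeight m d := by gcongr
    _ = (2*m+1) * O.card.choose m * openWeight m d := by rw [hab]; push_cast; ring

namespace UAProcess

variable {m : ℕ} {Ω : Type} [MeasurableSpace Ω] {P : Measure Ω} (X : UAProcess m P)

theorem measurableSet_pair_eq (n : ℕ) (p : SimpleGraph ℕ × SimpleGraph ℕ) :
    MeasurableSet {ω | (X.G n ω, X.G (n+1) ω) = p} := by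
  simp only [Prod.ext_iff]
  exact (X.meas n p.1).inter (X.meas (n+1) p.2)

variable [IsProbabilityMeasure P]

theorem ae_isUAStep {n : ℕ} (hn : m+1 ≤ n) (hG : ∀ᵐ ω ∂P, IsUAGraph m n (X.G n ω)) :
    ∀ᵐ ω ∂P, IsUAStep m n (X.G n ω) (X.G (n+1) ω) := by
  -- `stepAdm` is about an event not known to be measurable; it is null-measurable because
  -- `(G n, G (n+1))` takes only finitely many values on the event.
  have hnull : NullMeasurableSet {ω | IsUAStep m n (X.G n ω) (X.G (n+1) ω)} P :=
    nullMeasurableSet_setOf_of_ae_imp_mem (p := fun q => IsUAStep m n q.1 q.2)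
      (X.measurableSet_pair_eq n) (uaGraphs m n ×ˢ uaGraphs m (n+1))
      (hG.mono fun ω hg hs => mem_product.2 ⟨mem_uaGraphs.2 hg, mem_uaGraphs.2 (hs.isUAGraph hg)⟩)
  exact (ae_iff_measure_eq hnull).2 (by rw [X.stepAdm n hn, measure_univ])

theorem ae_isUAGraph {n : ℕ} (hn : m+1 ≤ n) : ∀ᵐ ω ∂P, IsUAGraph m n (X.G n ω) := by
  induction n, hn using Nat.le_induction with
  | base =>
    have hinit : ∀ᵐ ω ∂P, X.G (m+1) ω = completeOn (m+1) :=
      (ae_iff_measure_eq (X.meas _ _).nullMeasurableSet).2 (by rw [X.init, measure_univ])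
    exact hinit.mono fun ω h => h ▸ isUAGraph_completeOn m
  | succ n hn ih =>
    filter_upwards [ih, X.ae_isUAStep hn ih] with ω hg hs using hs.isUAGraph hg

def openPotential (n v : ℕ) : ℝ≥0∞ := ∫⁻ ω, openWeight m (degIn (X.G n ω) n v) ∂P

theorem openPotential_eq_sum {n : ℕ} (hn : m+1 ≤ n) (v : ℕ) :
    X.openPotential n v = ∑ g ∈ uaGraphs m n, openWeight m (degIn g n v) * P {ω | X.G n ω = g} :=
  lintegral_comp_eq_sum_of_ae_mem (fun g _ => (X.meas n g).nullMeasurableSet)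
    ((X.ae_isUAGraph hn).mono fun _ => mem_uaGraphs.2) fun g => openWeight m (degIn g n v)

theorem openPotential_succ_eq {n v : ℕ} (hn : m+1 ≤ n) (hv : v ∈ Icc 1 n) :
    X.openPotential (n+1) v = ∑ g ∈ uaGraphs m n, ∑ S ∈ (openVertices m n g).powersetCard m,
      openWeight m (degIn g n v + if v ∈ S then 1 else 0) *
        (P {ω | X.G n ω = g} / numOpenSets m n g) := by
  have hG := X.ae_isUAGraph hn
  have hstep := X.ae_isUAStep hn hG
  set T := (uaGraphs m n ×ˢ (Icc 1 n).powerset).filter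
    fun q => q.2 ∈ (openVertices m n q.1).powersetCard m
  have hT : ∀ q, q ∈ T ↔ q.1 ∈ uaGraphs m n ∧ q.2 ∈ (openVertices m n q.1).powersetCard m := by
    intro q
    simp only [T, mem_filter, mem_product, mem_powerset, and_assoc, and_congr_right_iff]
    exact fun _ => and_iff_right_of_imp fun hq =>
      (mem_powersetCard.1 hq).1.trans (filter_subset _ _)
  have hpair : ∀ᵐ ω ∂P, (X.G n ω, X.G (n+1) ω) ∈ uaGraphs m n ×ˢ uaGraphs m (n+1) := by
    filter_upwards [hG, hstep] with ω hg hs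
    exact mem_product.2 ⟨mem_uaGraphs.2 hg, mem_uaGraphs.2 (hs.isUAGraph hg)⟩
  let Y := fun ω => (X.G n ω, nbrsIn (X.G (n+1) ω) (n+1) (n+1))
  have hY : ∀ q ∈ T, NullMeasurableSet {ω | Y ω = q} P := fun q _ =>
    nullMeasurableSet_setOf_of_ae_imp_mem (p := fun z => (z.1, nbrsIn z.2 (n+1) (n+1)) = q)
      (X.measurableSet_pair_eq n) _ (hpair.mono fun _ h _ => h)
  have hYT : ∀ᵐ ω ∂P, Y ω ∈ T := by
    filter_upwards [hG, hstep] with ω hg hs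
    exact (hT _).2 ⟨mem_uaGraphs.2 hg, hs.nbrsIn_mem_powersetCard⟩
  calc X.openPotential (n+1) v
      = ∫⁻ ω, openWeight m (degIn (Y ω).1 n v + if v ∈ (Y ω).2 then 1 else 0) ∂P :=
        lintegral_congr_ae (hstep.mono fun ω hs => by dsimp only [Y]; rw [hs.degIn_succ hv])
    _ = ∑ q ∈ T, openWeight m (degIn q.1 n v + if v ∈ q.2 then 1 else 0) * P {ω | Y ω = q} :=
        lintegral_comp_eq_sum_of_ae_mem hY hYT
          fun q => openWeight m (degIn q.1 n v + if v ∈ q.2 then 1 else 0)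
    _ = _ := by
        rw [sum_finset_product T _ (fun g => (openVertices m n g).powersetCard m) hT]
        refine sum_congr rfl fun g hg => sum_congr rfl fun S hS => ?_
        rw [mem_powersetCard] at hS
        simp only [Y, Prod.mk.injEq]
        rw [X.stepUnif n hn g (mem_uaGraphs.1 hg).adj_mem S hS.2
          fun u hu => mem_filter.1 (hS.1 hu)]

theorem openPotential_succ_le {n v : ℕ} (hn : m+1 ≤ n) (hv : v ∈ Icc 1 n) :
    (2*m+2 : ℝ≥0∞) * X.openPotential (n+1) v ≤ (2*m+1) * X.openPotential n v := by
  rw [X.openPotential_succ_eq hn hv, X.openPotential_eq_sum hn, mul_sum, mul_sum]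
  refine sum_le_sum fun g hg => ?_
  set q := P {ω | X.G n ω = g} / numOpenSets m n g
  have hchoose : (numOpenSets m n g : ℝ≥0∞) = (openVertices m n g).card.choose m := rfl
  calc (2*m+2 : ℝ≥0∞) * ∑ S ∈ (openVertices m n g).powersetCard m,
        openWeight m (degIn g n v + if v ∈ S then 1 else 0) * q
      = (2*m+2 : ℝ≥0∞) * (∑ S ∈ (openVertices m n g).powersetCard m,
        openWeight m (degIn g n v + if v ∈ S then 1 else 0)) * q := by rw [← sum_mul, mul_assoc]
    _ ≤ (2*m+1) * (openVertices m n g).card.choose m * openWeight m (degIn g n v) * q := by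
        gcongr ?_ * q
        exact sum_powersetCard_openWeight_le (mem_uaGraphs.1 hg).card_openVertices_le
          fun hd => mem_filter.2 ⟨hv, hd⟩
    _ = (2*m+1) * (openWeight m (degIn g n v) * (numOpenSets m n g * q)) := by rw [hchoose]; ring
    _ ≤ (2*m+1) * (openWeight m (degIn g n v) * P {ω | X.G n ω = g}) := by
        gcongr
        exact ENNReal.mul_div_le

theorem pow_mul_openPotential_le {n₀ v : ℕ} (hn₀ : m+1 ≤ n₀) (hv : v ∈ Icc 1 n₀) (j : ℕ) :
    (2*m+2 : ℝ≥0∞)^j * X.openPotential (n₀+j) v ≤ (2*m+1)^j * X.openPotential n₀ v := by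
  induction j with
  | zero => simp
  | succ j ih =>
    have hv' : v ∈ Icc 1 (n₀+j) := by simp only [mem_Icc] at hv ⊢; omega
    calc (2*m+2 : ℝ≥0∞)^(j+1) * X.openPotential (n₀+(j+1)) v
        = (2*m+2)^j * ((2*m+2) * X.openPotential (n₀+j+1) v) := by ring_nf
      _ ≤ (2*m+2)^j * ((2*m+1) * X.openPotential (n₀+j) v) := by
          gcongr (2*m+2)^j * ?_
          exact X.openPotential_succ_le (by omega) hv'
      _ = (2*m+1) * ((2*m+2)^j * X.openPotential (n₀+j) v) := by ring
      _ ≤ (2*m+1)^(j+1) * X.openPotential n₀ v := by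
          rw [pow_succ', mul_assoc]
          gcongr (2*m+1) * ?_

theorem measure_degIn_lt_le_openPotential {n : ℕ} (hn : m+1 ≤ n) (v : ℕ) :
    P {ω | degIn (X.G n ω) n v < 2*m} ≤ X.openPotential n v := by
  have hnull : NullMeasurableSet {ω | degIn (X.G n ω) n v < 2*m} P :=
    nullMeasurableSet_setOf_of_ae_imp_mem (p := fun g => degIn g n v < 2*m) (X.meas n)
      (uaGraphs m n) ((X.ae_isUAGraph hn).mono fun _ h _ => mem_uaGraphs.2 h)
  rw [← lintegral_indicator_one₀ hnull]
  refine lintegral_mono fun ω => ?_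
  simp only [Set.indicator_apply, Set.mem_ofPred_eq, Pi.one_apply]
  split_ifs with h
  · rw [openWeight, if_pos h]
    exact one_le_pow₀ one_le_two
  · exact zero_le

theorem openPotential_le_two_pow (n v : ℕ) : X.openPotential n v ≤ 2^(2*m) :=
  calc X.openPotential n v ≤ ∫⁻ _, 2^(2*m) ∂P := lintegral_mono fun _ => openWeight_le_two_pow _ _
    _ = 2^(2*m) := by simp

theorem measure_degIn_lt_le {n₀ v : ℕ} (hn₀ : m+1 ≤ n₀) (hv : v ∈ Icc 1 n₀) (j : ℕ) :
    P {ω | degIn (X.G (n₀+j) ω) (n₀+j) v < 2*m}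
      ≤ ENNReal.ofReal (((2*m+1)/(2*m+2) : ℝ)^j * 2^(2*m)) := by
  have hcast₁ : ENNReal.ofReal (2*m+1) = 2*m+1 := by
    rw [ENNReal.ofReal_add (by positivity) zero_le_one, ENNReal.ofReal_mul zero_le_two,
      ENNReal.ofReal_natCast, ENNReal.ofReal_one, ENNReal.ofReal_ofNat]
  have hcast₂ : ENNReal.ofReal (2*m+2) = 2*m+2 := by
    rw [ENNReal.ofReal_add (by positivity) zero_le_two, ENNReal.ofReal_mul zero_le_two,
      ENNReal.ofReal_natCast, ENNReal.ofReal_ofNat]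
  rw [div_pow, div_mul_eq_mul_div, ENNReal.ofReal_div_of_pos (by positivity),
    ENNReal.ofReal_mul (by positivity), ENNReal.ofReal_pow (by positivity),
    ENNReal.ofReal_pow (by positivity), ENNReal.ofReal_pow (by positivity),
    ENNReal.ofReal_ofNat, hcast₁, hcast₂,
    ENNReal.le_div_iff_mul_le (Or.inl (by positivity)) (Or.inl (by finiteness))]
  calc P {ω | degIn (X.G (n₀+j) ω) (n₀+j) v < 2*m} * (2*m+2)^j
      ≤ (2*m+2)^j * X.openPotential (n₀+j) v := by
        rw [mul_comm]
        gcongr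
        exact X.measure_degIn_lt_le_openPotential (by omega) v
    _ ≤ (2*m+1)^j * X.openPotential n₀ v := X.pow_mul_openPotential_le hn₀ hv j
    _ ≤ (2*m+1)^j * 2^(2*m) := by gcongr; exact X.openPotential_le_two_pow n₀ v

end UAProcess

theorem pow_mul_le_div_pow_mul_exp {r A : ℝ} (hr₀ : 0 < r) (hr₁ : r ≤ 1) (hA : 0 ≤ A)
    {j k m : ℕ} (hk : k ≤ j + m) : r^j * A ≤ A / r^m * Real.exp (-(-Real.log r * k)) := by
  have hexp : Real.exp (-(-Real.log r * k)) = r^k := by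
    rw [neg_mul, neg_neg, mul_comm, Real.exp_nat_mul, Real.exp_log hr₀]
  rw [hexp]
  calc r^j * A = A / r^m * r^(j+m) := by field_simp; ring
    _ ≤ A / r^m * r^k :=
        mul_le_mul_of_nonneg_left (pow_le_pow_of_le_one hr₀.le hr₁ hk) (by positivity)

theorem uniform_attachment_open_probability_exponential_decay_general (m : ℕ) :
    ∃ C c : ℝ, 0 < C ∧ 0 < c ∧
      ∀ (Ω : Type) [MeasurableSpace Ω] (P : Measure Ω) [IsProbabilityMeasure P]
        (X : UAProcess m P) (v n : ℕ), 1 ≤ v → v ≤ n → m + 1 ≤ n →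
        P {ω | degIn (X.G n ω) n v < 2*m} ≤
          ENNReal.ofReal (C * Real.exp (-(c * ((n : ℝ) - (v : ℝ))))) := by
  set r : ℝ := (2*m+1)/(2*m+2)
  have hr₀ : 0 < r := by positivity
  have hr₁ : r < 1 := (div_lt_one (by positivity)).2 (by linarith)
  refine ⟨2^(2*m) / r^m, -Real.log r, by positivity, neg_pos.2 (Real.log_neg hr₀ hr₁), ?_⟩
  intro Ω _ P _ X v n hv hvn hn
  obtain ⟨j, rfl⟩ : ∃ j, n = max (m+1) v + j := ⟨n - max (m+1) v, by omega⟩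
  calc P {ω | degIn (X.G _ ω) _ v < 2*m} ≤ ENNReal.ofReal (r^j * 2^(2*m)) :=
        X.measure_degIn_lt_le (le_max_left _ _) (mem_Icc.2 ⟨hv, le_max_right _ _⟩) j
    _ ≤ _ := by
        refine ENNReal.ofReal_le_ofReal ?_
        rw [← Nat.cast_sub hvn]
        exact pow_mul_le_div_pow_mul_exp hr₀ hr₁.le (by positivity) (by omega)

/-- For every integer `m > 1` there are constants `C, c > 0` (depending only
on `m`) such that in the random uniform attachment graph process with degree cap `d = 2m`,
for every vertex `v` and every `n ≥ v`, the probability that `v` has degree `< 2m` in `G n`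
is at most `C · exp(−c(n−v))`. -/
theorem uniform_attachment_open_probability_exponential_decay (m : ℕ) (hm : 1 < m) :
    ∃ C c : ℝ, 0 < C ∧ 0 < c ∧
      ∀ (Ω : Type) [MeasurableSpace Ω] (P : Measure Ω) [IsProbabilityMeasure P]
        (X : UAProcess m P) (v n : ℕ), 1 ≤ v → v ≤ n → m + 1 ≤ n →
        P {ω | degIn (X.G n ω) n v < 2*m} ≤
          ENNReal.ofReal (C * Real.exp (-(c * ((n : ℝ) - (v : ℝ))))) :=
  uniform_attachment_open_probability_exponential_decay_general m
end
end
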